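/- Let N ≥ 2 be even. Let w₂ be the constant skew-symmetric N×N matrix with (w₂)_{ij} = 1 for i < j; let w₃ be the structure matrix on ℝ^N defined for i < j by (w₃)_{ij}(q) = e^{q_{i-1}−q_i} + (1 − δ_{i+1,j}) e^{q_i−q_{i+1}} + e^{q_{j-1}−q_j} + e^{q_j−q_{j+1}} (omitting any term with an undefined index), extended by skew-symmetry. Let i₁(q) = Σ_{k=1}^{N-1} e^{q_k−q_{k+1}} and i₀(q) = Σ_{k=1}^{N} (−1)^{k+1} q_k = q₁ − q₂ + q₃ − ⋯ + q_{N-1} − q_N. Then (w₂, w₃, i₁, i₀) form a bi-Hamiltonian pair: for every q ∈ ℝ^N and every i = 1,…,N, Σ_{l=1}^{N} (w₂)_{il} ∂i₁/∂q_l = Σ_{l=1}^{N} (w₃)_{il}(q) ∂i₀/∂q_l. -/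

import Mathlib

/-!
Write `E m = Eterm N q m` (zero outside `1 ≤ m ≤ N - 1`). Since `∂i₁/∂q_l = E (l+1) - E l`, row `i`
of `w₂ di₁` is a telescoping sum, equal to `-(E i + E (i+1))`. Since `∂i₀/∂q_l = (-1)^l`, each term
`(w₃)_{il} (-1)^l` is `sgn (l - i)` times `(E i + E (i+1)) (-1)^l` plus a consecutive difference,
so row `i` of `w₃ di₀` is `(E i + E (i+1)) ∑_l sgn (l - i) (-1)^l` plus a telescoping sum with
vanishing boundary terms; for even `N` the alternating sign sum is `-1`.
-/

open Real

/-- Partial derivative `∂f/∂q_l` at `q`. -/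
noncomputable def pd {n : ℕ} (f : (Fin n → ℝ) → ℝ) (x : Fin n → ℝ) (l : Fin n) : ℝ :=
  fderiv ℝ f x (Pi.single l 1)

/-- One-based exponential term: `Eterm N q m = e^{q_m - q_{m+1}}` for `1 ≤ m ≤ N-1`,
and `0` (the term is omitted) otherwise. -/
noncomputable def Eterm (N : ℕ) (q : Fin N → ℝ) (m : ℕ) : ℝ :=
  if h : 1 ≤ m ∧ m < N then Real.exp (q ⟨m - 1, by omega⟩ - q ⟨m, by omega⟩) else 0

/-- The constant skew-symmetric matrix `w₂` with `(w₂)_{ij} = 1` for `i < j`. -/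
def w2 (N : ℕ) : Matrix (Fin N) (Fin N) ℝ :=
  fun i j => if i.val < j.val then 1 else if j.val < i.val then -1 else 0

/-- The structure matrix `w₃` on `ℝ^N`: for one-based `i < j`,
`(w₃)_{ij} = e^{q_{i-1}-q_i} + (1-δ_{i+1,j}) e^{q_i-q_{i+1}} + e^{q_{j-1}-q_j} + e^{q_j-q_{j+1}}`
(undefined terms omitted), extended by skew-symmetry. -/
noncomputable def w3 (N : ℕ) (q : Fin N → ℝ) : Matrix (Fin N) (Fin N) ℝ :=
  fun i j =>
    let e : Fin N → Fin N → ℝ := fun i j =>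
      Eterm N q i.val + (if j.val = i.val + 1 then 0 else 1) * Eterm N q (i.val + 1)
        + Eterm N q j.val + Eterm N q (j.val + 1)
    if i.val < j.val then e i j
    else if j.val < i.val then -(e j i)
    else 0

/-- The Hamiltonian `i₁(q) = Σ_{k=1}^{N-1} e^{q_k - q_{k+1}}`. -/
noncomputable def i1 (N : ℕ) (q : Fin N → ℝ) : ℝ :=
  ∑ k : Fin (N-1),
    Real.exp (q ⟨k.val, by have := k.isLt; omega⟩ - q ⟨k.val + 1, by have := k.isLt; omega⟩)

/-- `i₀(q) = q₁ - q₂ + q₃ - ⋯ + q_{N-1} - q_N` (one-based signs `(-1)^{k+1}`,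
i.e. zero-based `(-1)^{k.val}`). -/
def i0 (N : ℕ) (q : Fin N → ℝ) : ℝ :=
  ∑ k : Fin N, (-1 : ℝ)^(k.val) * q k

open Finset

lemma pd_eq_of_hasFDerivAt {n : ℕ} {f : (Fin n → ℝ) → ℝ} {f' : (Fin n → ℝ) →L[ℝ] ℝ}
    {x : Fin n → ℝ} (h : HasFDerivAt f f' x) (l : Fin n) : pd f x l = f' (Pi.single l 1) := by
  rw [pd, h.fderiv]

lemma pd_finset_sum {n : ℕ} {ι : Type*} (s : Finset ι) {f : ι → (Fin n → ℝ) → ℝ}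
    {x : Fin n → ℝ} (hf : ∀ k ∈ s, DifferentiableAt ℝ (f k) x) (l : Fin n) :
    pd (fun y => ∑ k ∈ s, f k y) x l = ∑ k ∈ s, pd (f k) x l := by
  simp [pd, fderiv_fun_sum hf]

lemma pd_const_mul_apply {n : ℕ} (c : ℝ) (k : Fin n) (x : Fin n → ℝ) (l : Fin n) :
    pd (fun y => c * y k) x l = if k = l then c else 0 := by
  rw [pd_eq_of_hasFDerivAt ((hasFDerivAt_apply k x).const_mul c)]
  simp [Pi.single_apply]

lemma pd_exp_sub_apply {n : ℕ} (a b : Fin n) (x : Fin n → ℝ) (l : Fin n) :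
    pd (fun y => exp (y a - y b)) x l =
      exp (x a - x b) * ((if a = l then 1 else 0) - if b = l then 1 else 0) := by
  rw [pd_eq_of_hasFDerivAt ((hasFDerivAt_apply a x).fun_sub (hasFDerivAt_apply b x)).exp]
  simp [Pi.single_apply]

lemma pd_i0 (N : ℕ) (q : Fin N → ℝ) (l : Fin N) : pd (i0 N) q l = (-1) ^ (l : ℕ) := by
  rw [show i0 N = fun y => ∑ k : Fin N, (-1) ^ (k : ℕ) * y k from rfl,
    pd_finset_sum _ fun k _ => by fun_prop]
  simp [pd_const_mul_apply]

lemma Eterm_zero (N : ℕ) (q : Fin N → ℝ) : Eterm N q 0 = 0 := dif_neg (by omega)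

lemma Eterm_of_le {N m : ℕ} (q : Fin N → ℝ) (h : N ≤ m) : Eterm N q m = 0 := dif_neg (by omega)

lemma differentiable_Eterm (N m : ℕ) : Differentiable ℝ (fun q : Fin N → ℝ => Eterm N q m) := by
  unfold Eterm
  split_ifs <;> fun_prop

lemma pd_Eterm_apply (N m : ℕ) (q : Fin N → ℝ) (l : Fin N) :
    pd (fun y => Eterm N y m) q l =
      Eterm N q m * ((if m = l + 1 then 1 else 0) - if m = l then 1 else 0) := by
  by_cases h : 1 ≤ m ∧ m < N
  · simp only [Eterm, dif_pos h, pd_exp_sub_apply, Fin.ext_iff]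
    simp only [show m - 1 = (l : ℕ) ↔ m = l + 1 by omega]
  · simp [Eterm, dif_neg h, pd]

lemma i1_eq_sum_Eterm (N : ℕ) : i1 N = fun q => ∑ m ∈ range N, Eterm N q m := by
  funext q
  cases N with
  | zero => simp [i1]
  | succ n =>
    rw [sum_range_succ', Eterm_zero, add_zero, i1,
      ← Fin.sum_univ_eq_sum_range (fun k => Eterm (n + 1) q (k + 1))]
    refine sum_congr rfl fun k _ => ?_
    rw [Eterm, dif_pos (by omega)]
    rfl

lemma pd_i1 (N : ℕ) (q : Fin N → ℝ) (l : Fin N) :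
    pd (i1 N) q l = Eterm N q (l + 1) - Eterm N q l := by
  rw [i1_eq_sum_Eterm, pd_finset_sum _ fun m _ => (differentiable_Eterm N m).differentiableAt]
  simp only [pd_Eterm_apply, mul_sub, mul_ite, mul_one, mul_zero, sum_sub_distrib, sum_ite_eq',
    mem_range, l.isLt, if_true]
  split_ifs with h
  · rfl
  · rw [Eterm_of_le q (not_lt.mp h)]

lemma sum_w2_mul_sub {N : ℕ} (f : ℕ → ℝ) (i : Fin N) :
    ∑ l : Fin N, w2 N i l * (f (l + 1) - f l) = f N + f 0 - f i - f (i + 1) := by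
  set sgn : ℕ → ℝ := fun l => if (i : ℕ) < l then 1 else if l < (i : ℕ) then -1 else 0
  rw [show ∑ l : Fin N, w2 N i l * (f (l + 1) - f l) = ∑ l : Fin N, sgn l * (f (l + 1) - f l)
      from rfl, Fin.sum_univ_eq_sum_range (fun l => sgn l * (f (l + 1) - f l)),
    ← sum_range_add_sum_Ico _ i.isLt.le, sum_eq_sum_Ico_succ_bot i.isLt]
  have below : ∑ l ∈ range i, sgn l * (f (l + 1) - f l) = -(f i - f 0) := by
    rw [← sum_range_sub, ← sum_neg_distrib]
    refine sum_congr rfl fun l hl => ?_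
    rw [mem_range] at hl
    simp [sgn, hl, hl.not_gt]
  have above : ∑ l ∈ Ico (i + 1 : ℕ) N, sgn l * (f (l + 1) - f l) = f N - f (i + 1) := by
    rw [← sum_Ico_sub f i.isLt]
    refine sum_congr rfl fun l hl => ?_
    rw [mem_Ico] at hl
    simp [sgn, show (i : ℕ) < l by omega]
  rw [below, above]
  simp only [sgn, lt_irrefl, if_false, zero_mul, zero_add]
  ring

lemma sum_w2_mul_neg_one_pow {N : ℕ} (hN : Even N) (i : Fin N) :
    ∑ l : Fin N, w2 N i l * (-1) ^ (l : ℕ) = -1 := by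
  have h := sum_w2_mul_sub (fun m => -(-1) ^ m / 2) i
  simp only [pow_succ, hN.neg_one_pow] at h
  convert h using 2 <;> ring

lemma sum_w2_mul_pd_i1 (N : ℕ) (q : Fin N → ℝ) (i : Fin N) :
    ∑ l : Fin N, w2 N i l * pd (i1 N) q l = -(Eterm N q i + Eterm N q (i + 1)) := by
  simp only [pd_i1]
  rw [sum_w2_mul_sub, Eterm_of_le q le_rfl, Eterm_zero]
  ring

/- The `δ_{i+1,j}` correction in `w₃` amounts to deleting the terms `m = i, i + 1` from the series
`(-1)^(m+1) E m`, whose consecutive differences are `(-1)^m (E m + E (m+1))`. -/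
noncomputable def altEtermExcept (N : ℕ) (q : Fin N → ℝ) (i m : ℕ) : ℝ :=
  if m = i ∨ m = i + 1 then 0 else (-1) ^ (m + 1) * Eterm N q m

lemma w3_mul_neg_one_pow (N : ℕ) (q : Fin N → ℝ) (i l : Fin N) :
    w3 N q i l * (-1) ^ (l : ℕ) = w2 N i l * ((Eterm N q i + Eterm N q (i + 1)) * (-1) ^ (l : ℕ)
      + (altEtermExcept N q i (l + 1) - altEtermExcept N q i l)) := by
  obtain ⟨a, ha⟩ := i
  obtain ⟨b, hb⟩ := l
  simp only [w3, w2, altEtermExcept]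
  split_ifs <;> first | omega | (subst_vars; ring)

lemma sum_w3_mul_pd_i0 {N : ℕ} (hN : Even N) (q : Fin N → ℝ) (i : Fin N) :
    ∑ l : Fin N, w3 N q i l * pd (i0 N) q l = -(Eterm N q i + Eterm N q (i + 1)) := by
  simp only [pd_i0, w3_mul_neg_one_pow, mul_add, sum_add_distrib, mul_left_comm _ (_ + _),
    ← mul_sum, sum_w2_mul_neg_one_pow hN, sum_w2_mul_sub]
  simp [altEtermExcept, Eterm_zero, Eterm_of_le q le_rfl]

theorem stmt9_general (N : ℕ) (hEven : Even N) (q : Fin N → ℝ) (i : Fin N) :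
    ∑ l : Fin N, w2 N i l * pd (i1 N) q l
      = ∑ l : Fin N, w3 N q i l * pd (i0 N) q l := by
  rw [sum_w2_mul_pd_i1, sum_w3_mul_pd_i0 hEven]

/-- `(w₂, w₃, i₁, i₀)` is a bi-Hamiltonian pair: `w₂ di₁ = w₃ di₀`. -/
theorem stmt9 (N : ℕ) (hN : 2 ≤ N) (hEven : Even N) (q : Fin N → ℝ) (i : Fin N) :
    ∑ l : Fin N, w2 N i l * pd (i1 N) q l
      = ∑ l : Fin N, w3 N q i l * pd (i0 N) q l :=
  stmt9_general N hEven q i
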